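/- (Symmetry-Preserving, Lemma 5) Let σ be a permutation of Fin n, acting on vectors by (σ • y)_i = y_{σ⁻¹(i)}. Suppose f(σ • y) = f(y) for all y, σ • x = x, σ • x' = x', and σ maps the subset I₁ ⊆ Fin n bijectively onto the subset I₂ ⊆ Fin n. Then the IDG-Vis set attributions satisfy a(I₁) = a(I₂). -/

import Mathlib

open scoped RealInnerProductSpace
open MeasureTheory

/-- Direction vector `a_T`: coordinatewise `x_i - x'_i` on `T`, `0` elsewhere. -/
noncomputable def dirVec {n : ℕ} (x x' : EuclideanSpace ℝ (Fin n)) (T : Finset (Fin n)) :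
    EuclideanSpace ℝ (Fin n) :=
  WithLp.toLp 2 fun i => if i ∈ T then x i - x' i else 0

/-- Unit direction `â_T = a_T / ‖a_T‖` if `a_T ≠ 0`, else `0`. -/
noncomputable def unitDir {n : ℕ} (x x' : EuclideanSpace ℝ (Fin n)) (T : Finset (Fin n)) :
    EuclideanSpace ℝ (Fin n) :=
  letI := Classical.dec (dirVec x x' T = 0)
  if dirVec x x' T = 0 then 0 else ‖dirVec x x' T‖⁻¹ • dirVec x x' T

/-- Directional gradient `∇_T f(y) = |⟪∇f(y), â_T⟫|`. -/
noncomputable def dirGrad {n : ℕ} (f : EuclideanSpace ℝ (Fin n) → ℝ)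
    (x x' : EuclideanSpace ℝ (Fin n)) (T : Finset (Fin n))
    (y : EuclideanSpace ℝ (Fin n)) : ℝ :=
  |⟪gradient f y, unitDir x x' T⟫|

/-- IDG-Vis score: `∫₀¹ ∇_T f(x' + α (x - x')) dα`. -/
noncomputable def IDGVis {n : ℕ} (f : EuclideanSpace ℝ (Fin n) → ℝ)
    (x x' : EuclideanSpace ℝ (Fin n)) (T : Finset (Fin n)) : ℝ :=
  ∫ α in (0:ℝ)..1, dirGrad f x x' T (x' + α • (x - x'))

/-- Set attribution `a(I) = Σ_{T ⊆ I} IDGVis(T)`. -/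
noncomputable def setAttr {n : ℕ} (f : EuclideanSpace ℝ (Fin n) → ℝ)
    (x x' : EuclideanSpace ℝ (Fin n)) (I : Finset (Fin n)) : ℝ :=
  ∑ T ∈ I.powerset, IDGVis f x x' T

/-!
The coordinate permutation `σ` acts on `EuclideanSpace ℝ (Fin n)` as a linear isometry that fixes
`f`, `x`, `x'`, hence every point of the segment from `x'` to `x`. At a fixed point `y` the chain
rule for the linear equivalence gives `Df(y) ∘ σ = Df(y)`, so `⟪∇f(y), σ v⟫ = ⟪∇f(y), v⟫`; this
holds even where `f` is not differentiable, since both derivatives are then `0`. As `σ` maps `a_T`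
to `a_{σ T}` and preserves norms, `IDGVis(σ T) = IDGVis(T)`, and `T ↦ σ T` is a bijection from
the subsets of `I₁` onto those of `I₂`.
-/

theorem fderiv_apply_map_of_comp_eq {𝕜 E F : Type*} [NontriviallyNormedField 𝕜]
    [NormedAddCommGroup E] [NormedSpace 𝕜 E] [NormedAddCommGroup F] [NormedSpace 𝕜 F]
    (g : E ≃L[𝕜] E) {f : E → F} (hf : f ∘ g = f) {y : E} (hy : g y = y) (v : E) :
    fderiv 𝕜 f y (g v) = fderiv 𝕜 f y v := by
  have h := g.comp_right_fderiv (f := f) (x := y)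
  rw [hf, hy] at h
  exact (congrArg (· v) h).symm

theorem inner_gradient_map_of_comp_eq {E : Type*} [NormedAddCommGroup E]
    [InnerProductSpace ℝ E] [CompleteSpace E]
    (g : E ≃L[ℝ] E) {f : E → ℝ} (hf : f ∘ g = f) {y : E} (hy : g y = y) (v : E) :
    ⟪gradient f y, g v⟫ = ⟪gradient f y, v⟫ := by
  simp only [inner_gradient_left]
  exact fderiv_apply_map_of_comp_eq g hf hy v

namespace EuclideanSpace

variable {n : ℕ}

noncomputable abbrev permIso (σ : Equiv.Perm (Fin n)) :
    EuclideanSpace ℝ (Fin n) ≃ₗᵢ[ℝ] EuclideanSpace ℝ (Fin n) :=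
  LinearIsometryEquiv.piLpCongrLeft 2 ℝ ℝ σ

theorem permIso_apply (σ : Equiv.Perm (Fin n)) (v : EuclideanSpace ℝ (Fin n)) (i : Fin n) :
    permIso σ v i = v (σ⁻¹ i) := by
  simp [Equiv.piCongrLeft', Equiv.Perm.inv_def]

theorem permIso_eq_toLp (σ : Equiv.Perm (Fin n)) (v : EuclideanSpace ℝ (Fin n)) :
    permIso σ v = WithLp.toLp 2 (fun i => v (σ⁻¹ i)) := by
  ext i
  exact permIso_apply σ v i

end EuclideanSpace

open EuclideanSpace

section Symmetry

variable {n : ℕ} {x x' : EuclideanSpace ℝ (Fin n)}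

theorem dirVec_image {σ : Equiv.Perm (Fin n)} (hx : permIso σ x = x)
    (hx' : permIso σ x' = x') (T : Finset (Fin n)) :
    dirVec x x' (T.image σ) = permIso σ (dirVec x x' T) := by
  ext i
  have hxi : x (σ⁻¹ i) = x i := by rw [← permIso_apply, hx]
  have hxi' : x' (σ⁻¹ i) = x' i := by rw [← permIso_apply, hx']
  have hmem : i ∈ T.image σ ↔ σ⁻¹ i ∈ T := by
    simp [Equiv.Perm.inv_def, ← Equiv.eq_symm_apply]
  simp only [dirVec, permIso_apply, hmem, hxi, hxi']

theorem unitDir_eq_map_of_dirVec_eq_map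
    (g : EuclideanSpace ℝ (Fin n) ≃ₗᵢ[ℝ] EuclideanSpace ℝ (Fin n)) {S T : Finset (Fin n)}
    (h : dirVec x x' S = g (dirVec x x' T)) :
    unitDir x x' S = g (unitDir x x' T) := by
  by_cases h0 : dirVec x x' T = 0 <;> simp [unitDir, h, h0]

theorem dirGrad_image {f : EuclideanSpace ℝ (Fin n) → ℝ} {σ : Equiv.Perm (Fin n)}
    (hf : f ∘ permIso σ = f) (hx : permIso σ x = x) (hx' : permIso σ x' = x')
    (T : Finset (Fin n)) {y : EuclideanSpace ℝ (Fin n)} (hy : permIso σ y = y) :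
    dirGrad f x x' (T.image σ) y = dirGrad f x x' T y := by
  rw [dirGrad, dirGrad, unitDir_eq_map_of_dirVec_eq_map _ (dirVec_image hx hx' T)]
  exact congrArg abs
    (inner_gradient_map_of_comp_eq (permIso σ).toContinuousLinearEquiv hf hy _)

theorem IDGVis_image {f : EuclideanSpace ℝ (Fin n) → ℝ} {σ : Equiv.Perm (Fin n)}
    (hf : f ∘ permIso σ = f) (hx : permIso σ x = x) (hx' : permIso σ x' = x')
    (T : Finset (Fin n)) :
    IDGVis f x x' (T.image σ) = IDGVis f x x' T := by
  have hpath (α : ℝ) : permIso σ (x' + α • (x - x')) = x' + α • (x - x') := by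
    simp only [map_add, map_smul, map_sub, hx, hx']
  simp only [IDGVis, dirGrad_image hf hx hx' T (hpath _)]

theorem setAttr_image {f : EuclideanSpace ℝ (Fin n) → ℝ} {σ : Equiv.Perm (Fin n)}
    (hf : f ∘ permIso σ = f) (hx : permIso σ x = x) (hx' : permIso σ x' = x')
    (I : Finset (Fin n)) :
    setAttr f x x' (I.image σ) = setAttr f x x' I := by
  rw [setAttr, Finset.powerset_image,
    Finset.sum_image (Finset.image_injective σ.injective).injOn]
  exact Finset.sum_congr rfl fun T _ => IDGVis_image hf hx hx' T

end Symmetry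

theorem idgvis_symmetry_general {n : ℕ}
    (f : EuclideanSpace ℝ (Fin n) → ℝ)
    (x x' : EuclideanSpace ℝ (Fin n)) (σ : Equiv.Perm (Fin n))
    (hfσ : ∀ y : EuclideanSpace ℝ (Fin n),
        f (WithLp.toLp 2 (fun i => y (σ⁻¹ i)) : EuclideanSpace ℝ (Fin n)) = f y)
    (hx : (WithLp.toLp 2 (fun i => x (σ⁻¹ i)) : EuclideanSpace ℝ (Fin n)) = x)
    (hx' : (WithLp.toLp 2 (fun i => x' (σ⁻¹ i)) : EuclideanSpace ℝ (Fin n)) = x')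
    (I₁ I₂ : Finset (Fin n)) (hI : I₁.image σ = I₂) :
    setAttr f x x' I₁ = setAttr f x x' I₂ := by
  subst hI
  have hf : f ∘ permIso σ = f := funext fun y => (congrArg f (permIso_eq_toLp σ y)).trans (hfσ y)
  rw [← permIso_eq_toLp] at hx hx'
  exact (setAttr_image hf hx hx' I₁).symm

/-- **Symmetry-Preserving (Lemma 5).** If a permutation `σ` of the coordinates leaves `f`,
`x` and `x'` invariant and maps `I₁` bijectively onto `I₂`, then `a(I₁) = a(I₂)`. -/
theorem idgvis_symmetry {n : ℕ} (hn : 1 ≤ n)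
    (f : EuclideanSpace ℝ (Fin n) → ℝ) (hf : ContDiff ℝ 1 f)
    (x x' : EuclideanSpace ℝ (Fin n)) (σ : Equiv.Perm (Fin n))
    (hfσ : ∀ y : EuclideanSpace ℝ (Fin n),
        f (WithLp.toLp 2 (fun i => y (σ⁻¹ i)) : EuclideanSpace ℝ (Fin n)) = f y)
    (hx : (WithLp.toLp 2 (fun i => x (σ⁻¹ i)) : EuclideanSpace ℝ (Fin n)) = x)
    (hx' : (WithLp.toLp 2 (fun i => x' (σ⁻¹ i)) : EuclideanSpace ℝ (Fin n)) = x')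
    (I₁ I₂ : Finset (Fin n)) (hI : I₁.image σ = I₂) :
    setAttr f x x' I₁ = setAttr f x x' I₂ :=
  idgvis_symmetry_general f x x' σ hfσ hx hx' I₁ I₂ hI
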